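/- Let α be an index tuple with indices from {−m,…,−1} satisfying the SIP, and suppose c_{−k}(α) ≤ 1 and i_{−k}(α) ≤ 1 for every index 1 ≤ k ≤ m−1 (which forces c_{−m}(α) ≤ 2 and i_{−m}(α) ≤ 2). Let 𝒳 be a matrix assignment for α. Then M_α(𝒳) is a block penta-diagonal matrix; equivalently, for every k = 0,…,m−1, (e^T_{m−k} ⊗ I_n) M_α(𝒳) = Σ_{j=−2}^{2} (e^T_{m−(k−j)} ⊗ X_j), where each X_j is 0, I_n, or one of the matrices occurring in 𝒳. -/

import Mathlib

open Matrix Polynomial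

/-- Signed indices: `pos k` denotes `k` and `neg k` denotes `−k`, with `−0` and `0` distinct. -/
inductive SIdx : Type where
  | pos : ℕ → SIdx
  | neg : ℕ → SIdx
deriving DecidableEq

namespace SIdx

/-- The absolute value of a signed index. -/
def val : SIdx → ℕ
  | pos k => k
  | neg k => k

/-- Whether a signed index is negative. -/
def isNeg : SIdx → Bool
  | pos _ => false
  | neg _ => true

/-- The successor `t + 1` of a signed index (`−s + 1 = −(s−1)`). -/
def succ : SIdx → SIdx
  | pos k => pos (k + 1)
  | neg 0 => pos 0
  | neg (k + 1) => neg k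

/-- Negation of a signed index. -/
def negate : SIdx → SIdx
  | pos k => neg k
  | neg k => pos k

end SIdx

/-- The ascending chain `(t, t+1, …, t+p)`. -/
def chainUp (t : SIdx) : ℕ → List SIdx
  | 0 => [t]
  | p + 1 => t :: chainUp t.succ p

/-- The number of consecutions `c_t(α)` of the index tuple `α` at `t` (`−1` when `t ∉ α`):
the largest `p` such that `(t, t+1, …, t+p)` is a subtuple (sublist) of `α`. -/
noncomputable def consAt (α : List SIdx) (t : SIdx) : ℤ :=
  letI := Classical.decPred (fun p : ℕ => (chainUp t p).Sublist α)
  if t ∈ α then (Nat.findGreatest (fun p : ℕ => (chainUp t p).Sublist α) α.length : ℤ) else -1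

/-- The number of inversions `i_t(α)` of the index tuple `α` at `t` (`−1` when `t ∉ α`):
the largest `q` such that `(t+q, …, t+1, t)` is a subtuple (sublist) of `α`. -/
noncomputable def invsAt (α : List SIdx) (t : SIdx) : ℤ :=
  letI := Classical.decPred (fun p : ℕ => ((chainUp t p).reverse).Sublist α)
  if t ∈ α then (Nat.findGreatest (fun p : ℕ => ((chainUp t p).reverse).Sublist α) α.length : ℤ)
  else -1

/-- The Successor Infix Property: between any two equal entries there is an occurrence of
their successor. -/
def SIP (α : List SIdx) : Prop :=
  ∀ a b : Fin α.length, a < b → α.get a = α.get b →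
    ∃ c : Fin α.length, a < c ∧ c < b ∧ α.get c = (α.get a).succ

/-- The `mn × mn` elementary matrix `M_k(X)` (viewed as an `m × m` block matrix with
`n × n` blocks): `M_0(X) = M_{−0}(X) = diag(I_{(m−1)n}, X)`,
`M_m(X) = M_{−m}(X) = diag(X, I_{(m−1)n})`, and for `1 ≤ i ≤ m−1` the matrix `M_i(X)`
(resp. `M_{−i}(X)`) is the identity except for the 2×2 block submatrix
`[[X, I],[I, 0]]` (resp. `[[0, I],[I, X]]`) in block rows/columns `(m−i, m−i+1)`
(1-indexed). -/
noncomputable def elemMat (m n : ℕ) (k : SIdx) (X : Matrix (Fin n) (Fin n) ℂ) :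
    Matrix (Fin m × Fin n) (Fin m × Fin n) ℂ := fun p q =>
  if k.val = 0 then
    if p.1 = q.1 then (if (p.1 : ℕ) = m - 1 then X p.2 q.2 else if p.2 = q.2 then 1 else 0)
    else 0
  else if k.val = m then
    if p.1 = q.1 then (if (p.1 : ℕ) = 0 then X p.2 q.2 else if p.2 = q.2 then 1 else 0)
    else 0
  else
    if (p.1 : ℕ) = m - k.val - 1 ∧ (q.1 : ℕ) = m - k.val - 1 then
      (if k.isNeg then 0 else X p.2 q.2)
    else if ((p.1 : ℕ) = m - k.val - 1 ∧ (q.1 : ℕ) = m - k.val) ∨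
        ((p.1 : ℕ) = m - k.val ∧ (q.1 : ℕ) = m - k.val - 1) then
      (if p.2 = q.2 then 1 else 0)
    else if (p.1 : ℕ) = m - k.val ∧ (q.1 : ℕ) = m - k.val then
      (if k.isNeg then X p.2 q.2 else 0)
    else if p = q then 1 else 0

/-- `M_t(X) = M_{t_1}(X_1) ⋯ M_{t_r}(X_r)` for an index tuple `t` with matrix assignment `Xs`. -/
noncomputable def prodAssign (m n : ℕ) (t : List SIdx) (Xs : List (Matrix (Fin n) (Fin n) ℂ)) :
    Matrix (Fin m × Fin n) (Fin m × Fin n) ℂ :=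
  ((t.zip Xs).map fun p => elemMat m n p.1 p.2).prod

/-- The trivial (Fiedler) matrix assignment of `P(λ) = Σ λ^i A_i`:
`M_i^P = M_i(−A_i)` for `0 ≤ i ≤ m−1`, `M_m^P = (M_{−m}^P)⁻¹ = M_m(A_m⁻¹)`,
`M_{−i}^P = M_{−i}(A_i)` for `1 ≤ i ≤ m`, and `M_{−0}^P = (M_0^P)⁻¹ = M_{−0}((−A_0)⁻¹)`. -/
noncomputable def fiedlerX (m : ℕ) {n : ℕ} (A : ℕ → Matrix (Fin n) (Fin n) ℂ) :
    SIdx → Matrix (Fin n) (Fin n) ℂ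
  | .pos i => if i = m then (A m)⁻¹ else -A i
  | .neg i => if i = 0 then (-A 0)⁻¹ else A i

/-- `M_t^P`, the product of Fiedler matrices of `P` along the index tuple `t`. -/
noncomputable def prodFiedler (m n : ℕ) (A : ℕ → Matrix (Fin n) (Fin n) ℂ) (t : List SIdx) :
    Matrix (Fin m × Fin n) (Fin m × Fin n) ℂ :=
  (t.map fun k => elemMat m n k (fiedlerX m A k)).prod

/-- A nonsingular matrix assignment: the matrices assigned to positions with indices
`±0` or `±m` are nonsingular. -/
def NonsingAssign (m : ℕ) {n : ℕ} (t : List SIdx) (Xs : List (Matrix (Fin n) (Fin n) ℂ)) :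
    Prop :=
  t.length = Xs.length ∧ ∀ p ∈ t.zip Xs, (p.1.val = 0 ∨ p.1.val = m) → IsUnit p.2

/-- The data of an extended generalized Fiedler pencil (EGFP)
`L(λ) = M_{τ₁}(Y₁) M_{σ₁}(X₁) (λ M_τ^P − M_σ^P) M_{σ₂}(X₂) M_{τ₂}(Y₂)`
of the `n × n` matrix polynomial `P(λ) = Σ_{i=0}^m λ^i A_i` of degree `m ≥ 2`. -/
structure EGFPData (m n : ℕ) where
  /-- coefficients of `P` -/
  A : ℕ → Matrix (Fin n) (Fin n) ℂ
  sig : List SIdx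
  tau : List SIdx
  sig1 : List SIdx
  sig2 : List SIdx
  tau1 : List SIdx
  tau2 : List SIdx
  X1 : List (Matrix (Fin n) (Fin n) ℂ)
  X2 : List (Matrix (Fin n) (Fin n) ℂ)
  Y1 : List (Matrix (Fin n) (Fin n) ℂ)
  Y2 : List (Matrix (Fin n) (Fin n) ℂ)
  hm : 2 ≤ m
  hAm : A m ≠ 0
  hsigpos : ∀ k ∈ sig, k.isNeg = false
  htauneg : ∀ k ∈ tau, k.isNeg = true
  /-- `(σ, ω)` is a permutation of `{0, 1, …, m}`, where `τ = −ω`. -/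
  hperm : List.Perm (sig.map SIdx.val ++ tau.map SIdx.val) (List.range (m + 1))
  hsig1 : ∀ k ∈ sig1, k ∈ sig ∧ k.val + 2 ≤ m
  hsig2 : ∀ k ∈ sig2, k ∈ sig ∧ k.val + 2 ≤ m
  htau1 : ∀ k ∈ tau1, k ∈ tau ∧ 2 ≤ k.val
  htau2 : ∀ k ∈ tau2, k ∈ tau ∧ 2 ≤ k.val
  hSIPsig : SIP (sig1 ++ sig ++ sig2)
  hSIPtau : SIP (tau1 ++ tau ++ tau2)
  hX1 : NonsingAssign m sig1 X1
  hX2 : NonsingAssign m sig2 X2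
  hY1 : NonsingAssign m tau1 Y1
  hY2 : NonsingAssign m tau2 Y2
  hA0 : SIdx.neg 0 ∈ tau → IsUnit (A 0)
  hAmUnit : SIdx.pos m ∈ sig → IsUnit (A m)

namespace EGFPData

variable {m n : ℕ}

/-- `M_{τ₁}(Y₁) M_{σ₁}(X₁)`. -/
noncomputable def leftFac (E : EGFPData m n) : Matrix (Fin m × Fin n) (Fin m × Fin n) ℂ :=
  prodAssign m n E.tau1 E.Y1 * prodAssign m n E.sig1 E.X1

/-- `M_{σ₂}(X₂) M_{τ₂}(Y₂)`. -/
noncomputable def rightFac (E : EGFPData m n) : Matrix (Fin m × Fin n) (Fin m × Fin n) ℂ :=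
  prodAssign m n E.sig2 E.X2 * prodAssign m n E.tau2 E.Y2

/-- The coefficient `L₁` of `λ` in `L(λ) = λ L₁ − L₀`. -/
noncomputable def L1 (E : EGFPData m n) : Matrix (Fin m × Fin n) (Fin m × Fin n) ℂ :=
  E.leftFac * prodFiedler m n E.A E.tau * E.rightFac

/-- The constant term `L₀` in `L(λ) = λ L₁ − L₀`. -/
noncomputable def L0 (E : EGFPData m n) : Matrix (Fin m × Fin n) (Fin m × Fin n) ℂ :=
  E.leftFac * prodFiedler m n E.A E.sig * E.rightFac

end EGFPData

/-- The `(i, j)` block (of size `n × n`) of an `mn × mn` matrix. -/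
def blockOf {m n : ℕ} (M : Matrix (Fin m × Fin n) (Fin m × Fin n) ℂ) (i j : Fin m) :
    Matrix (Fin n) (Fin n) ℂ := fun p q => M (i, p) (j, q)

/-- Block penta-diagonal: all blocks `B_{ij}` with `|i − j| > 2` vanish. -/
def BlockPenta {m n : ℕ} (M : Matrix (Fin m × Fin n) (Fin m × Fin n) ℂ) : Prop :=
  ∀ i j : Fin m, ((i : ℕ) + 2 < (j : ℕ) ∨ (j : ℕ) + 2 < (i : ℕ)) → blockOf M i j = 0

/-- Block tridiagonal: all blocks `B_{ij}` with `|i − j| > 1` vanish. -/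
def BlockTri {m n : ℕ} (M : Matrix (Fin m × Fin n) (Fin m × Fin n) ℂ) : Prop :=
  ∀ i j : Fin m, ((i : ℕ) + 1 < (j : ℕ) ∨ (j : ℕ) + 1 < (i : ℕ)) → blockOf M i j = 0

/-- `e_j^T ⊗ I_n` as an `n × mn` matrix, for a 1-indexed block index `j`
(zero when `j` is out of range). -/
def rowSel (m n : ℕ) (j : ℤ) : Matrix (Fin n) (Fin m × Fin n) ℂ :=
  fun p q => if ((q.1 : ℕ) : ℤ) + 1 = j ∧ p = q.2 then 1 else 0

/-- `e_j ⊗ I_n` as an `mn × n` matrix, for a 1-indexed block index `j`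
(zero when `j` is out of range). -/
def colSel (m n : ℕ) (j : ℤ) : Matrix (Fin m × Fin n) (Fin n) ℂ :=
  fun p q => if ((p.1 : ℕ) : ℤ) + 1 = j ∧ p.2 = q then 1 else 0

/-- The matrix polynomial `P(λ) = Σ_{i=0}^m λ^i A_i` as an `n × n` matrix over `ℂ[λ]`. -/
noncomputable def polyP (m n : ℕ) (A : ℕ → Matrix (Fin n) (Fin n) ℂ) :
    Matrix (Fin n) (Fin n) (Polynomial ℂ) := fun p q =>
  ∑ i ∈ Finset.range (m + 1), Polynomial.C (A i p q) * Polynomial.X ^ i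

section AuxProof

open SIdx

lemma SIdx_succ_neg {k : ℕ} (hk : 1 ≤ k) : (SIdx.neg k).succ = SIdx.neg (k-1) := by
  cases k with
  | zero => omega
  | succ k' => rfl

lemma chainUp_two (t : SIdx) : chainUp t 2 = [t, t.succ, t.succ.succ] := rfl

lemma consAt_no_chain {α : List SIdx} {t : SIdx} (h : consAt α t ≤ 1)
    (hsub : (chainUp t 2).Sublist α) : False := by
  letI := Classical.decPred (fun p : ℕ => (chainUp t p).Sublist α)
  have ht : t ∈ α := hsub.subset (by rw [chainUp_two]; simp)
  rw [consAt, if_pos ht] at h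
  have hlen : 3 ≤ α.length := by simpa [chainUp_two] using hsub.length_le
  have h2 : 2 ≤ Nat.findGreatest (fun p : ℕ => (chainUp t p).Sublist α) α.length :=
    Nat.le_findGreatest (by omega) hsub
  exact absurd h (by exact_mod_cast by omega)

lemma invsAt_no_chain {α : List SIdx} {t : SIdx} (h : invsAt α t ≤ 1)
    (hsub : ((chainUp t 2).reverse).Sublist α) : False := by
  letI := Classical.decPred (fun p : ℕ => ((chainUp t p).reverse).Sublist α)
  have ht : t ∈ α := hsub.subset (by rw [chainUp_two]; simp)
  rw [invsAt, if_pos ht] at h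
  have hlen : 3 ≤ α.length := by simpa [chainUp_two] using hsub.length_le
  have h2 : 2 ≤ Nat.findGreatest (fun p : ℕ => ((chainUp t p).reverse).Sublist α) α.length :=
    Nat.le_findGreatest (by omega) hsub
  exact absurd h (by exact_mod_cast by omega)

lemma get_cons_of_pos {x : SIdx} {w : List SIdx} (c : Fin (x :: w).length)
    (hc : 0 < (c : ℕ)) (h2 : (c : ℕ) - 1 < w.length) :
    (x :: w).get c = w.get ⟨(c : ℕ) - 1, h2⟩ := by
  rcases c with ⟨cv, hcv⟩
  rcases cv with _ | cv
  · simp at hc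
  · simp

lemma sip_tail {x : SIdx} {w : List SIdx} (h : SIP (x :: w)) : SIP w := by
  intro a b hab heq
  have ha1 : (a : ℕ) + 1 < (x :: w).length := by simpa using a.isLt
  have hb1 : (b : ℕ) + 1 < (x :: w).length := by simpa using b.isLt
  obtain ⟨c, hac, hcb, hgc⟩ := h ⟨(a : ℕ) + 1, ha1⟩ ⟨(b : ℕ) + 1, hb1⟩
    (by rw [Fin.lt_def]; exact Nat.succ_lt_succ hab) (by simpa using heq)
  have hac' : (a : ℕ) + 1 < (c : ℕ) := hac
  have hcb' : (c : ℕ) < (b : ℕ) + 1 := hcb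
  have hcl : (c : ℕ) - 1 < w.length := by
    have hcc := c.isLt; simp only [List.length_cons] at hcc; omega
  refine ⟨⟨(c : ℕ) - 1, hcl⟩, ?_, ?_, ?_⟩
  · exact Fin.lt_def.mpr (show (a : ℕ) < (c : ℕ) - 1 by omega)
  · exact Fin.lt_def.mpr (show (c : ℕ) - 1 < (b : ℕ) by omega)
  · have hc : (x :: w).get c = w.get ⟨(c : ℕ) - 1, hcl⟩ :=
      get_cons_of_pos c (by omega) hcl
    rw [← hc, hgc]; simp

lemma sip_contra {x : SIdx} {w₁ w₂ : List SIdx} (h : SIP (x :: (w₁ ++ x :: w₂)))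
    (hn : x.succ ∉ w₁) : False := by
  have hb : w₁.length + 1 < (x :: (w₁ ++ x :: w₂)).length := by simp
  have h0 : 0 < (x :: (w₁ ++ x :: w₂)).length := by simp
  have hgb : (x :: (w₁ ++ x :: w₂)).get ⟨w₁.length + 1, hb⟩ = x := by
    show (x :: (w₁ ++ x :: w₂))[w₁.length + 1] = x
    rw [List.getElem_cons_succ, List.getElem_append_right (le_refl w₁.length)]
    simp
  obtain ⟨c, h0c, hcb, hgc⟩ := h ⟨0, h0⟩ ⟨w₁.length + 1, hb⟩
    (by rw [Fin.lt_def]; simp) (by rw [hgb]; rfl)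
  have hc1 : 1 ≤ (c : ℕ) := h0c
  have hc2 : (c : ℕ) - 1 < w₁.length := by
    have : (c : ℕ) < w₁.length + 1 := hcb
    omega
  have hcl : (c : ℕ) - 1 < (w₁ ++ x :: w₂).length := by simp; omega
  have hgc' : (x :: (w₁ ++ x :: w₂)).get c = (w₁ ++ x :: w₂).get ⟨(c : ℕ) - 1, hcl⟩ :=
    get_cons_of_pos c (by omega) hcl
  have hgc'' : (w₁ ++ x :: w₂).get ⟨(c : ℕ) - 1, hcl⟩ = w₁[(c : ℕ) - 1] := by
    show (w₁ ++ x :: w₂)[(c : ℕ) - 1] = _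
    rw [List.getElem_append_left hc2]
  have hx : (x :: (w₁ ++ x :: w₂)).get ⟨0, h0⟩ = x := rfl
  rw [hgc', hgc'', hx] at hgc
  exact hn (hgc ▸ List.getElem_mem _)

end AuxProof
/-- Formal block pattern: `iota v = some c` records an identity block at `(v,c)`;
`dirt v c = some X` records block `X` at `(v,c)`. -/
structure Pat (m n : ℕ) where
  iota : Fin m → Option (Fin m)
  dirt : Fin m → Fin m → Option (Matrix (Fin n) (Fin n) ℂ)

namespace Pat

variable {m n : ℕ}

noncomputable def realize (π : Pat m n) : Matrix (Fin m × Fin n) (Fin m × Fin n) ℂ :=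
  fun p q =>
    if π.iota p.1 = some q.1 then (if p.2 = q.2 then 1 else 0)
    else match π.dirt p.1 q.1 with
      | some X => X p.2 q.2
      | none => 0

def supp (π : Pat m n) (v c : Fin m) : Prop := π.iota v = some c ∨ π.dirt v c ≠ none

end Pat

/-- letter of row `v`: the index `−(m−v)`. -/
def ltr (m v : ℕ) : SIdx := SIdx.neg (m - v)

/-- Invariant tying a pattern to the index word `w` and the matrix list `Ys`. -/
structure Good (m n : ℕ) (w : List SIdx) (Ys : List (Matrix (Fin n) (Fin n) ℂ))
    (π : Pat m n) : Prop where
  inj : ∀ v v' c, π.iota v = some c → π.iota v' = some c → v = v'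
  disj : ∀ v c, π.iota v = some c → π.dirt v c = none
  ord : ∀ v v' c, π.iota v = some c → π.dirt v' c ≠ none → (v : ℕ) < (v' : ℕ)
  pen : ∀ v c, π.supp v c → (v : ℕ) ≤ (c : ℕ) + 2 ∧ (c : ℕ) ≤ (v : ℕ) + 2
  s0 : ∀ v c, π.supp v c → (c : ℕ) = (v : ℕ) + 1 → ltr m ((v : ℕ) + 1) ∈ w
  sp : ∀ v c, π.supp v c → (c : ℕ) = (v : ℕ) + 2 →
      [ltr m ((v : ℕ) + 1), ltr m ((v : ℕ) + 2)].Sublist w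
  s0' : ∀ v c, π.supp v c → (c : ℕ) + 1 = (v : ℕ) → ltr m (v : ℕ) ∈ w
  sm : ∀ v c, π.supp v c → (c : ℕ) + 2 = (v : ℕ) →
      [ltr m (v : ℕ), ltr m ((v : ℕ) - 1)].Sublist w
  cln : ∀ v : Fin m, (∃ c, π.dirt v c ≠ none) →
      ∃ w₁ w₂, w = w₁ ++ ltr m (v : ℕ) :: w₂ ∧ ltr m ((v : ℕ) + 1) ∉ w₁
  dmem : ∀ v c X, π.dirt v c = some X → X ∈ Ys

/-- the identity pattern -/
def Pat.id (m n : ℕ) : Pat m n := ⟨fun v => some v, fun _ _ => none⟩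

lemma Pat.realize_id (m n : ℕ) : (Pat.id m n).realize = 1 := by
  funext p q
  simp only [Pat.realize, Pat.id, Option.some.injEq, Matrix.one_apply, Prod.ext_iff]
  by_cases h1 : p.1 = q.1 <;> by_cases h2 : p.2 = q.2 <;> simp [h1, h2]

lemma good_id (m n : ℕ) (w : List SIdx) (Ys : List (Matrix (Fin n) (Fin n) ℂ)) :
    Good m n w Ys (Pat.id m n) := by
  constructor
  · intro v v' c hv hv'
    simp only [Pat.id, Option.some.injEq] at hv hv'; rw [hv, hv']
  · intro v c _; rfl
  · intro v v' c _ hd; exact absurd rfl hd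
  · intro v c hs
    rcases hs with hs | hs
    · simp only [Pat.id, Option.some.injEq] at hs; omega
    · exact absurd rfl hs
  · intro v c hs h
    rcases hs with hs | hs
    · simp only [Pat.id, Option.some.injEq] at hs; omega
    · exact absurd rfl hs
  · intro v c hs h
    rcases hs with hs | hs
    · simp only [Pat.id, Option.some.injEq] at hs; omega
    · exact absurd rfl hs
  · intro v c hs h
    rcases hs with hs | hs
    · simp only [Pat.id, Option.some.injEq] at hs; omega
    · exact absurd rfl hs
  · intro v c hs h
    rcases hs with hs | hs
    · simp only [Pat.id, Option.some.injEq] at hs; omega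
    · exact absurd rfl hs
  · intro v hd
    obtain ⟨c, hc⟩ := hd; exact absurd rfl hc
  · intro v c X h; exact absurd h (by simp [Pat.id])
section MatLemmas

variable {m n : ℕ} {k : ℕ} (Y : Matrix (Fin n) (Fin n) ℂ)

lemma elemS_apply_other (hk0 : k ≠ 0) (hkm : k ≠ m) {v : Fin m} (p : Fin n)
    (hv1 : (v : ℕ) ≠ m - k - 1) (hv2 : (v : ℕ) ≠ m - k) (j : Fin m × Fin n) :
    elemMat m n (SIdx.neg k) Y (v, p) j = if (v, p) = j then 1 else 0 := by
  rcases j with ⟨j1, j2⟩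
  simp only [elemMat, SIdx.val, SIdx.isNeg, hk0, hkm, if_false, hv1, hv2, false_and,
    false_or, if_neg, not_false_eq_true, Prod.mk.injEq]
  try (split_ifs <;> tauto)

lemma elemS_apply_top (hk0 : k ≠ 0) (hkm' : k < m) {v : Fin m} (p : Fin n)
    (hv1 : (v : ℕ) = m - k - 1) (j : Fin m × Fin n) :
    elemMat m n (SIdx.neg k) Y (v, p) j =
      if (j.1 : ℕ) = m - k ∧ j.2 = p then 1 else 0 := by
  have hkm : k ≠ m := by omega
  have hne : ¬ ((v : ℕ) = m - k) := by omega
  have hd : ¬ (m - k - 1 = m - k) := by omega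
  have hd' : ¬ (m - k = m - k - 1) := by omega
  rcases j with ⟨j1, j2⟩
  by_cases hj1 : (j1 : ℕ) = m - k - 1
  · have hj2 : ¬ ((j1 : ℕ) = m - k) := by omega
    simp [elemMat, SIdx.val, SIdx.isNeg, hk0, hkm, hv1, hj1, hj2, hd]
  · by_cases hj2 : (j1 : ℕ) = m - k
    · simp only [elemMat, SIdx.val, SIdx.isNeg, hk0, hkm, if_false, hv1, hj1, hj2, hne]
      simp [eq_comm, hd']
    · have hvj : v ≠ j1 := by intro he; rw [he] at hv1; exact hj1 hv1
      simp [elemMat, SIdx.val, SIdx.isNeg, hk0, hkm, hv1, hj1, hj2, hne, hvj, Prod.ext_iff]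

lemma elemS_apply_bot (hk0 : k ≠ 0) (hkm' : k < m) {v : Fin m} (p : Fin n)
    (hv1 : (v : ℕ) = m - k) (j : Fin m × Fin n) :
    elemMat m n (SIdx.neg k) Y (v, p) j =
      (if (j.1 : ℕ) = m - k - 1 ∧ j.2 = p then 1 else 0)
        + (if (j.1 : ℕ) = m - k then Y p j.2 else 0) := by
  have hkm : k ≠ m := by omega
  have hne : ¬ ((v : ℕ) = m - k - 1) := by omega
  have hd : ¬ (m - k - 1 = m - k) := by omega
  have hd' : ¬ (m - k = m - k - 1) := by omega
  rcases j with ⟨j1, j2⟩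
  by_cases hj1 : (j1 : ℕ) = m - k - 1
  · have hj2 : ¬ ((j1 : ℕ) = m - k) := by omega
    simp only [elemMat, SIdx.val, SIdx.isNeg, hk0, hkm, if_false, hv1, hj1, hj2, hne]
    simp [eq_comm, hd, hd']
  · by_cases hj2 : (j1 : ℕ) = m - k
    · simp [elemMat, SIdx.val, SIdx.isNeg, hk0, hkm, hv1, hj1, hj2, hne, hd, hd']
    · have hvj : v ≠ j1 := by intro he; rw [he] at hv1; exact hj2 hv1
      simp [elemMat, SIdx.val, SIdx.isNeg, hk0, hkm, hv1, hj1, hj2, hne, hvj, Prod.ext_iff]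

lemma elemD_apply_other (hm : m ≠ 0) {v : Fin m} (p : Fin n)
    (hv : (v : ℕ) ≠ 0) (j : Fin m × Fin n) :
    elemMat m n (SIdx.neg m) Y (v, p) j = if (v, p) = j then 1 else 0 := by
  rcases j with ⟨j1, j2⟩
  by_cases hj : v = j1
  · subst hj; simp [elemMat, SIdx.val, SIdx.isNeg, hm, hv, Prod.ext_iff]
  · simp [elemMat, SIdx.val, SIdx.isNeg, hm, hj, hv, Prod.ext_iff]

lemma elemD_apply_bot (hm : m ≠ 0) {v : Fin m} (p : Fin n)
    (hv : (v : ℕ) = 0) (j : Fin m × Fin n) :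
    elemMat m n (SIdx.neg m) Y (v, p) j = if (j.1 : ℕ) = 0 then Y p j.2 else 0 := by
  rcases j with ⟨j1, j2⟩
  by_cases hj : v = j1
  · subst hj; simp [elemMat, SIdx.val, SIdx.isNeg, hm, hv, Prod.ext_iff]
  · have hj0 : ¬ ((j1 : ℕ) = 0) := by
      intro h0; exact hj (Fin.ext (by omega))
    simp [elemMat, SIdx.val, SIdx.isNeg, hm, hj, hv, hj0, Prod.ext_iff]

end MatLemmas
section MulRowLemmas

variable {m n : ℕ}

lemma sum_pick (f : Fin m × Fin n → ℂ) (r : ℕ) (hr : r < m) (p : Fin n) :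
    ∑ j : Fin m × Fin n, (if (j.1 : ℕ) = r ∧ j.2 = p then (1:ℂ) else 0) * f j
      = f (⟨r, hr⟩, p) := by
  rw [Finset.sum_eq_single ((⟨r, hr⟩ : Fin m), p)]
  · simp
  · intro b _ hb
    rw [if_neg, zero_mul]
    intro ⟨h1, h2⟩
    exact hb (Prod.ext (Fin.ext h1) h2)
  · intro h; exact absurd (Finset.mem_univ _) h

lemma sum_row (f : Fin m × Fin n → ℂ) (r : ℕ) (hr : r < m) (g : Fin n → ℂ) :
    ∑ j : Fin m × Fin n, (if (j.1 : ℕ) = r then g j.2 else 0) * f j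
      = ∑ j2 : Fin n, g j2 * f (⟨r, hr⟩, j2) := by
  rw [Fintype.sum_prod_type, Finset.sum_eq_single (⟨r, hr⟩ : Fin m)]
  · simp
  · intro b _ hb
    have : ¬ ((b : ℕ) = r) := fun h => hb (Fin.ext h)
    simp [this]
  · intro h; exact absurd (Finset.mem_univ _) h

variable {k : ℕ} (Y : Matrix (Fin n) (Fin n) ℂ) (N : Matrix (Fin m × Fin n) (Fin m × Fin n) ℂ)

lemma mulS_other (hk0 : k ≠ 0) (hkm : k ≠ m) {v : Fin m} (p : Fin n)
    (hv1 : (v : ℕ) ≠ m - k - 1) (hv2 : (v : ℕ) ≠ m - k) (z : Fin m × Fin n) :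
    (elemMat m n (SIdx.neg k) Y * N) (v, p) z = N (v, p) z := by
  rw [Matrix.mul_apply, Finset.sum_eq_single (v, p)]
  · rw [elemS_apply_other Y hk0 hkm p hv1 hv2]; simp
  · intro b _ hb
    rw [elemS_apply_other Y hk0 hkm p hv1 hv2, if_neg (fun h => hb h.symm), zero_mul]
  · intro h; exact absurd (Finset.mem_univ _) h

lemma mulS_top (hk0 : k ≠ 0) (hkm' : k < m) {v : Fin m} (p : Fin n)
    (hv1 : (v : ℕ) = m - k - 1) (z : Fin m × Fin n) :
    (elemMat m n (SIdx.neg k) Y * N) (v, p) z = N (⟨m - k, by omega⟩, p) z := by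
  rw [Matrix.mul_apply]
  have he : ∀ j, elemMat m n (SIdx.neg k) Y (v, p) j
      = if (j.1 : ℕ) = m - k ∧ j.2 = p then (1:ℂ) else 0 :=
    fun j => elemS_apply_top Y hk0 hkm' p hv1 j
  simp only [he]
  exact sum_pick (fun j => N j z) _ (by omega) p

lemma mulS_bot (hk0 : k ≠ 0) (hkm' : k < m) {v : Fin m} (p : Fin n)
    (hv1 : (v : ℕ) = m - k) (z : Fin m × Fin n) :
    (elemMat m n (SIdx.neg k) Y * N) (v, p) z =
      N (⟨m - k - 1, by omega⟩, p) z
        + ∑ j2 : Fin n, Y p j2 * N (⟨m - k, by omega⟩, j2) z := by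
  rw [Matrix.mul_apply]
  have he : ∀ j, elemMat m n (SIdx.neg k) Y (v, p) j * N j z
      = (if (j.1 : ℕ) = m - k - 1 ∧ j.2 = p then (1:ℂ) else 0) * N j z
        + (if (j.1 : ℕ) = m - k then Y p j.2 else 0) * N j z := by
    intro j
    rw [elemS_apply_bot Y hk0 hkm' p hv1, add_mul]
  simp only [he]
  rw [Finset.sum_add_distrib, sum_pick (fun j => N j z) _ (by omega) p,
    sum_row (fun j => N j z) _ (by omega)]

lemma mulD_other (hm : m ≠ 0) {v : Fin m} (p : Fin n)
    (hv : (v : ℕ) ≠ 0) (z : Fin m × Fin n) :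
    (elemMat m n (SIdx.neg m) Y * N) (v, p) z = N (v, p) z := by
  rw [Matrix.mul_apply, Finset.sum_eq_single (v, p)]
  · rw [elemD_apply_other Y hm p hv]; simp
  · intro b _ hb
    rw [elemD_apply_other Y hm p hv, if_neg (fun h => hb h.symm), zero_mul]
  · intro h; exact absurd (Finset.mem_univ _) h

lemma mulD_bot (hm : m ≠ 0) {v : Fin m} (p : Fin n)
    (hv : (v : ℕ) = 0) (z : Fin m × Fin n) :
    (elemMat m n (SIdx.neg m) Y * N) (v, p) z =
      ∑ j2 : Fin n, Y p j2 * N (⟨0, by omega⟩, j2) z := by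
  rw [Matrix.mul_apply]
  have he : ∀ j, elemMat m n (SIdx.neg m) Y (v, p) j
      = if (j.1 : ℕ) = 0 then Y p j.2 else 0 :=
    fun j => elemD_apply_bot Y hm p hv j
  simp only [he]
  exact sum_row (fun j => N j z) _ (by omega) _

end MulRowLemmas
section StepDefs

variable {m n : ℕ}

/-- row swap for the operation `M_{-k}`, `1 ≤ k ≤ m-1` -/
def swpS (m : ℕ) (k : ℕ) (hk1 : 1 ≤ k) (hkm : k < m) (v : Fin m) : Fin m :=
  if (v : ℕ) = m - k - 1 then ⟨m - k, by omega⟩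
  else if (v : ℕ) = m - k then ⟨m - k - 1, by omega⟩ else v

lemma swpS_invol (k : ℕ) (hk1 : 1 ≤ k) (hkm : k < m) (v : Fin m) :
    swpS m k hk1 hkm (swpS m k hk1 hkm v) = v := by
  have h0 : ¬ (m - k = m - k - 1) := by omega
  unfold swpS
  by_cases h1 : (v : ℕ) = m - k - 1
  · rw [if_pos h1, if_neg h0, if_pos rfl]
    exact Fin.ext h1.symm
  · by_cases h2 : (v : ℕ) = m - k
    · rw [if_neg h1, if_pos h2, if_pos rfl]
      exact Fin.ext h2.symm
    · rw [if_neg h1, if_neg h2, if_neg h1, if_neg h2]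

lemma swpS_inj (k : ℕ) (hk1 : 1 ≤ k) (hkm : k < m) :
    Function.Injective (swpS m k hk1 hkm) := by
  intro a b h
  have := congrArg (swpS m k hk1 hkm) h
  rwa [swpS_invol, swpS_invol] at this

/-- pattern update for `M_{-k}(Y)`, `1 ≤ k ≤ m-1` -/
def patS (k : ℕ) (hk1 : 1 ≤ k) (hkm : k < m) (Y : Matrix (Fin n) (Fin n) ℂ)
    (π : Pat m n) : Pat m n where
  iota v := π.iota (swpS m k hk1 hkm v)
  dirt v c :=
    if (v : ℕ) = m - k - 1 then none
    else if (v : ℕ) = m - k then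
      (if π.iota ⟨m - k, by omega⟩ = some c then some Y else π.dirt ⟨m - k - 1, by omega⟩ c)
    else π.dirt v c

/-- pattern update for `M_{-m}(Y)` -/
def patD (hm0 : 0 < m) (Y : Matrix (Fin n) (Fin n) ℂ) (π : Pat m n) : Pat m n where
  iota v := if (v : ℕ) = 0 then none else π.iota v
  dirt v c := if (v : ℕ) = 0 then (if π.iota ⟨0, hm0⟩ = some c then some Y else none)
    else π.dirt v c

lemma realize_patS (k : ℕ) (hk1 : 1 ≤ k) (hkm : k < m)
    (Y : Matrix (Fin n) (Fin n) ℂ) (π : Pat m n)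
    (hclean : ∀ c, π.dirt ⟨m - k, by omega⟩ c = none)
    (hO2a : ∀ c, π.iota ⟨m - k, by omega⟩ = some c → ¬ π.iota ⟨m - k - 1, by omega⟩ = some c)
    (hO2b : ∀ c, π.iota ⟨m - k, by omega⟩ = some c → π.dirt ⟨m - k - 1, by omega⟩ c = none) :
    (patS k hk1 hkm Y π).realize = elemMat m n (SIdx.neg k) Y * π.realize := by
  funext pq z
  rcases pq with ⟨v, p⟩
  rcases z with ⟨c, q⟩
  by_cases hv1 : (v : ℕ) = m - k - 1
  · rw [mulS_top Y π.realize (by omega) hkm p hv1]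
    have hsw : swpS m k hk1 hkm v = ⟨m - k, by omega⟩ := by unfold swpS; rw [if_pos hv1]
    simp only [Pat.realize, patS, hsw]
    rw [if_pos hv1, hclean c]
  · by_cases hv2 : (v : ℕ) = m - k
    · rw [mulS_bot Y π.realize (by omega) hkm p hv2]
      have hsw : swpS m k hk1 hkm v = ⟨m - k - 1, by omega⟩ := by
        unfold swpS; rw [if_neg hv1, if_pos hv2]
      have hsum : ∑ j2 : Fin n, Y p j2 * π.realize (⟨m - k, by omega⟩, j2) (c, q)
          = if π.iota ⟨m - k, by omega⟩ = some c then Y p q else 0 := by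
        have hval : ∀ j2, π.realize (⟨m - k, by omega⟩, j2) (c, q)
            = if π.iota ⟨m - k, by omega⟩ = some c then (if j2 = q then (1:ℂ) else 0)
              else 0 := by
          intro j2
          simp only [Pat.realize]
          rw [hclean c]
        simp only [hval]
        by_cases hio : π.iota ⟨m - k, by omega⟩ = some c
        · simp [hio, mul_ite, Finset.sum_ite_eq']
        · simp [hio]
      rw [hsum]
      simp only [Pat.realize, patS, hsw]
      rw [if_neg hv1, if_pos hv2]
      by_cases hA : π.iota ⟨m - k - 1, by omega⟩ = some c
      · rw [if_pos hA, if_pos hA, if_neg (fun h => hO2a c h hA)]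
        simp
      · rw [if_neg hA, if_neg hA]
        by_cases hB : π.iota ⟨m - k, by omega⟩ = some c
        · rw [if_pos hB, if_pos hB, hO2b c hB]
          simp
        · rw [if_neg hB, if_neg hB]
          cases π.dirt ⟨m - k - 1, by omega⟩ c <;> simp
    · rw [mulS_other Y π.realize (by omega) (by omega) p hv1 hv2]
      have hsw : swpS m k hk1 hkm v = v := by unfold swpS; rw [if_neg hv1, if_neg hv2]
      simp only [Pat.realize, patS, hsw]
      rw [if_neg hv1, if_neg hv2]

lemma realize_patD (hm0 : 0 < m) (Y : Matrix (Fin n) (Fin n) ℂ) (π : Pat m n)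
    (hclean : ∀ c, π.dirt ⟨0, hm0⟩ c = none) :
    (patD hm0 Y π).realize = elemMat m n (SIdx.neg m) Y * π.realize := by
  funext pq z
  rcases pq with ⟨v, p⟩
  rcases z with ⟨c, q⟩
  by_cases hv : (v : ℕ) = 0
  · rw [mulD_bot Y π.realize (by omega) p hv]
    have hv' : v = ⟨0, hm0⟩ := Fin.ext hv
    have hsum : ∑ j2 : Fin n, Y p j2 * π.realize (⟨0, by omega⟩, j2) (c, q)
        = if π.iota ⟨0, hm0⟩ = some c then Y p q else 0 := by
      have hval : ∀ j2, π.realize (⟨0, by omega⟩, j2) (c, q)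
          = if π.iota ⟨0, hm0⟩ = some c then (if j2 = q then (1:ℂ) else 0) else 0 := by
        intro j2
        simp only [Pat.realize]
        rw [hclean c]
      simp only [hval]
      by_cases hio : π.iota ⟨0, hm0⟩ = some c
      · simp [hio, mul_ite, Finset.sum_ite_eq']
      · simp [hio]
    rw [hsum]
    simp only [Pat.realize, patD]
    simp only [if_pos hv]
    by_cases hio : π.iota ⟨0, hm0⟩ = some c
    · rw [if_pos hio, if_pos hio]; simp
    · rw [if_neg hio, if_neg hio]; simp
  · rw [mulD_other Y π.realize (by omega) p hv]
    simp only [Pat.realize, patD]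
    simp only [if_neg hv]

end StepDefs
section StepGood

variable {m n : ℕ}

lemma ltr_succ {v : ℕ} (hv : v < m) : (ltr m v).succ = ltr m (v + 1) := by
  unfold ltr
  rw [SIdx_succ_neg (by omega), Nat.sub_sub]

lemma ltr_of_eq {a b : ℕ} (h : m - a = b) : ltr m a = SIdx.neg b := by
  unfold ltr; rw [h]

/-- A row whose letter heads the word is clean. -/
lemma clean_row {w' : List SIdx} {Ys : List (Matrix (Fin n) (Fin n) ℂ)} {π : Pat m n}
    (v : Fin m) (G : Good m n w' Ys π)
    (hsip : SIP (ltr m (v : ℕ) :: w')) :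
    ∀ c, π.dirt v c = none := by
  intro c
  by_contra hd
  obtain ⟨w₁, w₂, he, hn⟩ := G.cln v ⟨c, hd⟩
  rw [he] at hsip
  refine sip_contra hsip ?_
  rw [ltr_succ v.isLt]
  exact hn

lemma good_patS (k : ℕ) (hk1 : 1 ≤ k) (hkm : k < m)
    (Y : Matrix (Fin n) (Fin n) ℂ) (Ys : List (Matrix (Fin n) (Fin n) ℂ))
    (w' : List SIdx) (π : Pat m n)
    (G : Good m n w' Ys π)
    (hsip : SIP (SIdx.neg k :: w'))
    (hc3 : ∀ k', 3 ≤ k' → k' ≤ m - 1 →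
      ¬ ([SIdx.neg k', SIdx.neg (k'-1), SIdx.neg (k'-2)].Sublist (SIdx.neg k :: w')))
    (hi3 : ∀ k', 3 ≤ k' → k' ≤ m - 1 →
      ¬ ([SIdx.neg (k'-2), SIdx.neg (k'-1), SIdx.neg k'].Sublist (SIdx.neg k :: w'))) :
    (∀ c, π.dirt ⟨m - k, by omega⟩ c = none) ∧
    (∀ c, π.iota ⟨m - k, by omega⟩ = some c → ¬ π.iota ⟨m - k - 1, by omega⟩ = some c) ∧
    (∀ c, π.iota ⟨m - k, by omega⟩ = some c → π.dirt ⟨m - k - 1, by omega⟩ c = none) ∧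
    Good m n (SIdx.neg k :: w') (Y :: Ys) (patS k hk1 hkm Y π) := by
  have hrr : m - k < m := by omega
  have hrm : m - k - 1 < m := by omega
  set rr : Fin m := ⟨m - k, hrr⟩ with hrrdef
  set rm1 : Fin m := ⟨m - k - 1, hrm⟩ with hrmdef
  have hrrval : (rr : ℕ) = m - k := rfl
  have hrmval : (rm1 : ℕ) = m - k - 1 := rfl
  have hne : rm1 ≠ rr := by
    intro h; have := congrArg Fin.val h; simp [hrrval, hrmval] at this; omega
  have hheadltr : ltr m (m - k) = SIdx.neg k := ltr_of_eq (by omega)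
  -- cleanliness of row rr
  have hclean : ∀ c, π.dirt rr c = none := by
    apply clean_row rr G
    rw [hrrval, hheadltr]
    exact hsip
  -- O2
  have hO2a : ∀ c, π.iota rr = some c → ¬ π.iota rm1 = some c := by
    intro c h h'
    exact hne (G.inj rm1 rr c h' h)
  have hO2b : ∀ c, π.iota rr = some c → π.dirt rm1 c = none := by
    intro c h
    by_contra hd
    have := G.ord rr rm1 c h hd
    rw [hrrval, hrmval] at this
    omega
  -- no support of row rr at column m-k+2
  have hS3 : ∀ c : Fin m, π.supp rr c → (c : ℕ) ≠ m - k + 2 := by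
    intro c hs hc
    have h3 : 3 ≤ k := by have := c.isLt; omega
    have hsub := G.sp rr c hs (by rw [hrrval]; omega)
    rw [hrrval] at hsub
    have e1 : ltr m (m - k + 1) = SIdx.neg (k - 1) := ltr_of_eq (by omega)
    have e2 : ltr m (m - k + 2) = SIdx.neg (k - 2) := ltr_of_eq (by omega)
    rw [e1, e2] at hsub
    exact hc3 k h3 (by omega) (List.Sublist.cons₂ _ hsub)
  -- no support of row rm1 at column m-k-3
  have hS4 : ∀ c : Fin m, π.supp rm1 c → (c : ℕ) + 3 ≠ m - k := by
    intro c hs hc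
    have hsub := G.sm rm1 c hs (by rw [hrmval]; omega)
    rw [hrmval] at hsub
    have e1 : ltr m (m - k - 1) = SIdx.neg (k + 1) := ltr_of_eq (by omega)
    have e2 : ltr m (m - k - 1 - 1) = SIdx.neg (k + 2) := ltr_of_eq (by omega)
    rw [e1, e2] at hsub
    have := hi3 (k + 2) (by omega) (by omega)
    rw [show k + 2 - 2 = k by omega, show k + 2 - 1 = k + 1 by omega] at this
    exact this (List.Sublist.cons₂ _ hsub)
  refine ⟨hclean, hO2a, hO2b, ?_⟩
  -- swap facts
  have hswt : ∀ v : Fin m, (v : ℕ) = m - k - 1 → swpS m k hk1 hkm v = rr := by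
    intro v hv; unfold swpS; rw [if_pos hv]
  have hswb : ∀ v : Fin m, (v : ℕ) = m - k → swpS m k hk1 hkm v = rm1 := by
    intro v hv; unfold swpS; rw [if_neg (by omega), if_pos hv]
  have hswo : ∀ v : Fin m, (v : ℕ) ≠ m - k - 1 → (v : ℕ) ≠ m - k →
      swpS m k hk1 hkm v = v := by
    intro v hv1 hv2; unfold swpS; rw [if_neg hv1, if_neg hv2]
  -- dirt description
  have hdirt1 : ∀ (v : Fin m) c, (v : ℕ) = m - k - 1 → (patS k hk1 hkm Y π).dirt v c = none := by
    intro v c hv; show (if _ then _ else _) = none; rw [if_pos hv]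
  have hdirt2 : ∀ (v : Fin m) c, (v : ℕ) = m - k → (patS k hk1 hkm Y π).dirt v c
      = (if π.iota rr = some c then some Y else π.dirt rm1 c) := by
    intro v c hv; show (if _ then _ else _) = _; rw [if_neg (by omega), if_pos hv]
  have hdirt3 : ∀ (v : Fin m) c, (v : ℕ) ≠ m - k - 1 → (v : ℕ) ≠ m - k →
      (patS k hk1 hkm Y π).dirt v c = π.dirt v c := by
    intro v c hv1 hv2; show (if _ then _ else _) = _; rw [if_neg hv1, if_neg hv2]
  have hiota : ∀ v : Fin m, (patS k hk1 hkm Y π).iota v = π.iota (swpS m k hk1 hkm v) :=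
    fun v => rfl
  constructor
  -- inj
  · intro v v' c h h'
    rw [hiota] at h h'
    exact swpS_inj k hk1 hkm (G.inj _ _ c h h')
  -- disj
  · intro v c h
    rw [hiota] at h
    by_cases hv1 : (v : ℕ) = m - k - 1
    · exact hdirt1 v c hv1
    · by_cases hv2 : (v : ℕ) = m - k
      · rw [hdirt2 v c hv2]
        rw [hswb v hv2] at h
        rw [if_neg (fun hB => hne (G.inj rm1 rr c h hB))]
        exact G.disj rm1 c h
      · rw [hdirt3 v c hv1 hv2]
        rw [hswo v hv1 hv2] at h
        exact G.disj v c h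
  -- ord
  · intro v v' c hio hd
    rw [hiota] at hio
    by_cases hv1' : (v' : ℕ) = m - k - 1
    · rw [hdirt1 v' c hv1'] at hd; exact absurd rfl hd
    · by_cases hv2' : (v' : ℕ) = m - k
      · rw [hdirt2 v' c hv2'] at hd
        by_cases hB : π.iota rr = some c
        · -- v must be rm1
          have hsv : swpS m k hk1 hkm v = rr := G.inj _ _ c hio hB
          have hv : v = rm1 := by
            have := congrArg (swpS m k hk1 hkm) hsv
            rw [swpS_invol] at this
            rw [this, hrrdef]
            apply hswb
            rfl
          rw [hv, hrmval, hv2']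
          omega
        · rw [if_neg hB] at hd
          have hlt := G.ord _ _ c hio hd
          rw [hrmval] at hlt
          -- swp v has val < m-k-1, so swp v = v
          by_cases hv1 : (v : ℕ) = m - k - 1
          · rw [hswt v hv1, hrrval] at hlt; omega
          · by_cases hv2 : (v : ℕ) = m - k
            · rw [hswb v hv2, hrmval] at hlt; omega
            · rw [hswo v hv1 hv2] at hlt; omega
      · rw [hdirt3 v' c hv1' hv2'] at hd
        have hlt := G.ord _ _ c hio hd
        by_cases hv1 : (v : ℕ) = m - k - 1
        · rw [hswt v hv1, hrrval] at hlt; omega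
        · by_cases hv2 : (v : ℕ) = m - k
          · rw [hswb v hv2, hrmval] at hlt; omega
          · rw [hswo v hv1 hv2] at hlt; exact hlt
  -- pen
  · intro v c hs
    by_cases hv1 : (v : ℕ) = m - k - 1
    · have hio : π.iota rr = some c := by
        rcases hs with hio | hd
        · rw [hiota, hswt v hv1] at hio; exact hio
        · rw [hdirt1 v c hv1] at hd; exact absurd rfl hd
      have hpen := G.pen rr c (Or.inl hio)
      have hne3 := hS3 c (Or.inl hio)
      rw [hrrval] at hpen
      omega
    · by_cases hv2 : (v : ℕ) = m - k
      · rcases hs with hio | hd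
        · rw [hiota, hswb v hv2] at hio
          have hpen := G.pen rm1 c (Or.inl hio)
          have hne4 := hS4 c (Or.inl hio)
          rw [hrmval] at hpen
          omega
        · rw [hdirt2 v c hv2] at hd
          by_cases hB : π.iota rr = some c
          · have hpen := G.pen rr c (Or.inl hB)
            rw [hrrval] at hpen
            omega
          · rw [if_neg hB] at hd
            have hpen := G.pen rm1 c (Or.inr hd)
            have hne4 := hS4 c (Or.inr hd)
            rw [hrmval] at hpen
            omega
      · have hs' : π.supp v c := by
          rcases hs with hio | hd
          · rw [hiota, hswo v hv1 hv2] at hio; exact Or.inl hio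
          · rw [hdirt3 v c hv1 hv2] at hd; exact Or.inr hd
        exact G.pen v c hs'
  -- s0
  · intro v c hs hc
    by_cases hv1 : (v : ℕ) = m - k - 1
    · rw [show (v : ℕ) + 1 = m - k by omega, hheadltr]
      exact List.mem_cons_self
    · by_cases hv2 : (v : ℕ) = m - k
      · rcases hs with hio | hd
        · rw [hiota, hswb v hv2] at hio
          have hsub := G.sp rm1 c (Or.inl hio) (by rw [hrmval]; omega)
          rw [hrmval, show m - k - 1 + 2 = (v : ℕ) + 1 by omega] at hsub
          exact List.mem_cons_of_mem _ (hsub.subset (by simp))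
        · rw [hdirt2 v c hv2] at hd
          by_cases hB : π.iota rr = some c
          · have hmem := G.s0 rr c (Or.inl hB) (by rw [hrrval]; omega)
            rw [hrrval, show m - k + 1 = (v : ℕ) + 1 by omega] at hmem
            exact List.mem_cons_of_mem _ hmem
          · rw [if_neg hB] at hd
            have hsub := G.sp rm1 c (Or.inr hd) (by rw [hrmval]; omega)
            rw [hrmval, show m - k - 1 + 2 = (v : ℕ) + 1 by omega] at hsub
            exact List.mem_cons_of_mem _ (hsub.subset (by simp))
      · have hs' : π.supp v c := by
          rcases hs with hio | hd
          · rw [hiota, hswo v hv1 hv2] at hio; exact Or.inl hio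
          · rw [hdirt3 v c hv1 hv2] at hd; exact Or.inr hd
        exact List.mem_cons_of_mem _ (G.s0 v c hs' hc)
  -- sp
  · intro v c hs hc
    by_cases hv1 : (v : ℕ) = m - k - 1
    · have hio : π.iota rr = some c := by
        rcases hs with hio | hd
        · rw [hiota, hswt v hv1] at hio; exact hio
        · rw [hdirt1 v c hv1] at hd; exact absurd rfl hd
      have hmem := G.s0 rr c (Or.inl hio) (by rw [hrrval]; omega)
      rw [hrrval] at hmem
      rw [show (v : ℕ) + 1 = m - k by omega, show (v : ℕ) + 2 = m - k + 1 by omega, hheadltr]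
      exact List.Sublist.cons₂ _ (List.singleton_sublist.mpr hmem)
    · by_cases hv2 : (v : ℕ) = m - k
      · exfalso
        rcases hs with hio | hd
        · rw [hiota, hswb v hv2] at hio
          have hpen := G.pen rm1 c (Or.inl hio)
          rw [hrmval] at hpen
          omega
        · rw [hdirt2 v c hv2] at hd
          by_cases hB : π.iota rr = some c
          · exact hS3 c (Or.inl hB) (by omega)
          · rw [if_neg hB] at hd
            have hpen := G.pen rm1 c (Or.inr hd)
            rw [hrmval] at hpen
            omega
      · have hs' : π.supp v c := by
          rcases hs with hio | hd
          · rw [hiota, hswo v hv1 hv2] at hio; exact Or.inl hio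
          · rw [hdirt3 v c hv1 hv2] at hd; exact Or.inr hd
        exact List.Sublist.cons _ (G.sp v c hs' hc)
  -- s0'
  · intro v c hs hc
    by_cases hv1 : (v : ℕ) = m - k - 1
    · have hio : π.iota rr = some c := by
        rcases hs with hio | hd
        · rw [hiota, hswt v hv1] at hio; exact hio
        · rw [hdirt1 v c hv1] at hd; exact absurd rfl hd
      have hsub := G.sm rr c (Or.inl hio) (by rw [hrrval]; omega)
      rw [hrrval, show m - k - 1 = (v : ℕ) by omega] at hsub
      exact List.mem_cons_of_mem _ (hsub.subset (by simp))
    · by_cases hv2 : (v : ℕ) = m - k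
      · rw [show (v : ℕ) = m - k by omega, hheadltr]
        exact List.mem_cons_self
      · have hs' : π.supp v c := by
          rcases hs with hio | hd
          · rw [hiota, hswo v hv1 hv2] at hio; exact Or.inl hio
          · rw [hdirt3 v c hv1 hv2] at hd; exact Or.inr hd
        exact List.mem_cons_of_mem _ (G.s0' v c hs' hc)
  -- sm
  · intro v c hs hc
    by_cases hv1 : (v : ℕ) = m - k - 1
    · exfalso
      have hio : π.iota rr = some c := by
        rcases hs with hio | hd
        · rw [hiota, hswt v hv1] at hio; exact hio
        · rw [hdirt1 v c hv1] at hd; exact absurd rfl hd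
      have hpen := G.pen rr c (Or.inl hio)
      rw [hrrval] at hpen
      omega
    · by_cases hv2 : (v : ℕ) = m - k
      · rw [show (v : ℕ) = m - k by omega, hheadltr]
        have hmem : ltr m (m - k - 1) ∈ w' := by
          rcases hs with hio | hd
          · rw [hiota, hswb v hv2] at hio
            have := G.s0' rm1 c (Or.inl hio) (by rw [hrmval]; omega)
            rw [hrmval] at this
            exact this
          · rw [hdirt2 v c hv2] at hd
            by_cases hB : π.iota rr = some c
            · have hsub := G.sm rr c (Or.inl hB) (by rw [hrrval]; omega)
              rw [hrrval] at hsub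
              exact hsub.subset (by simp)
            · rw [if_neg hB] at hd
              have := G.s0' rm1 c (Or.inr hd) (by rw [hrmval]; omega)
              rw [hrmval] at this
              exact this
        exact List.Sublist.cons₂ _ (List.singleton_sublist.mpr hmem)
      · have hs' : π.supp v c := by
          rcases hs with hio | hd
          · rw [hiota, hswo v hv1 hv2] at hio; exact Or.inl hio
          · rw [hdirt3 v c hv1 hv2] at hd; exact Or.inr hd
        exact List.Sublist.cons _ (G.sm v c hs' hc)
  -- cln
  · intro v hd
    obtain ⟨c, hc⟩ := hd
    by_cases hv1 : (v : ℕ) = m - k - 1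
    · rw [hdirt1 v c hv1] at hc; exact absurd rfl hc
    · by_cases hv2 : (v : ℕ) = m - k
      · refine ⟨[], w', ?_, by simp⟩
        rw [show (v : ℕ) = m - k by omega, hheadltr]
        rfl
      · rw [hdirt3 v c hv1 hv2] at hc
        obtain ⟨w₁, w₂, he, hn⟩ := G.cln v ⟨c, hc⟩
        refine ⟨SIdx.neg k :: w₁, w₂, by rw [he]; rfl, ?_⟩
        intro hmem
        rcases List.mem_cons.mp hmem with hh | ht
        · have : m - ((v : ℕ) + 1) = k := by
            have := congrArg SIdx.val hh
            simpa [ltr, SIdx.val] using this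
          have hvm := v.isLt
          omega
        · exact hn ht
  -- dmem
  · intro v c X h
    by_cases hv1 : (v : ℕ) = m - k - 1
    · rw [hdirt1 v c hv1] at h; exact absurd h (by simp)
    · by_cases hv2 : (v : ℕ) = m - k
      · rw [hdirt2 v c hv2] at h
        by_cases hB : π.iota rr = some c
        · rw [if_pos hB] at h
          rw [Option.some_inj] at h
          rw [← h]
          exact List.mem_cons_self
        · rw [if_neg hB] at h
          exact List.mem_cons_of_mem _ (G.dmem rm1 c X h)
      · rw [hdirt3 v c hv1 hv2] at h
        exact List.mem_cons_of_mem _ (G.dmem v c X h)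

end StepGood
section StepGoodD

variable {m n : ℕ}

lemma good_patD (hm0 : 0 < m)
    (Y : Matrix (Fin n) (Fin n) ℂ) (Ys : List (Matrix (Fin n) (Fin n) ℂ))
    (w' : List SIdx) (π : Pat m n)
    (G : Good m n w' Ys π)
    (hsip : SIP (SIdx.neg m :: w')) :
    (∀ c, π.dirt ⟨0, hm0⟩ c = none) ∧
    Good m n (SIdx.neg m :: w') (Y :: Ys) (patD hm0 Y π) := by
  have hheadltr : ltr m 0 = SIdx.neg m := ltr_of_eq (by omega)
  have hclean : ∀ c, π.dirt ⟨0, hm0⟩ c = none := by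
    apply clean_row ⟨0, hm0⟩ G
    show SIP (ltr m 0 :: w')
    rw [hheadltr]
    exact hsip
  refine ⟨hclean, ?_⟩
  have hiota0 : ∀ v : Fin m, (v : ℕ) = 0 → (patD hm0 Y π).iota v = none := by
    intro v hv; show (if _ then _ else _) = none; rw [if_pos hv]
  have hiota1 : ∀ v : Fin m, (v : ℕ) ≠ 0 → (patD hm0 Y π).iota v = π.iota v := by
    intro v hv; show (if _ then _ else _) = _; rw [if_neg hv]
  have hdirt0 : ∀ (v : Fin m) c, (v : ℕ) = 0 → (patD hm0 Y π).dirt v c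
      = (if π.iota ⟨0, hm0⟩ = some c then some Y else none) := by
    intro v c hv; show (if _ then _ else _) = _; rw [if_pos hv]
  have hdirt1 : ∀ (v : Fin m) c, (v : ℕ) ≠ 0 → (patD hm0 Y π).dirt v c = π.dirt v c := by
    intro v c hv; show (if _ then _ else _) = _; rw [if_neg hv]
  have hsupp0 : ∀ (v : Fin m) c, (v : ℕ) = 0 → (patD hm0 Y π).supp v c →
      π.supp ⟨0, hm0⟩ c := by
    intro v c hv hs
    rcases hs with hio | hd
    · rw [hiota0 v hv] at hio; exact absurd hio (by simp)
    · rw [hdirt0 v c hv] at hd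
      by_cases hB : π.iota ⟨0, hm0⟩ = some c
      · exact Or.inl hB
      · rw [if_neg hB] at hd; exact absurd rfl hd
  have hsupp1 : ∀ (v : Fin m) c, (v : ℕ) ≠ 0 → (patD hm0 Y π).supp v c → π.supp v c := by
    intro v c hv hs
    rcases hs with hio | hd
    · rw [hiota1 v hv] at hio; exact Or.inl hio
    · rw [hdirt1 v c hv] at hd; exact Or.inr hd
  constructor
  -- inj
  · intro v v' c h h'
    by_cases hv : (v : ℕ) = 0
    · rw [hiota0 v hv] at h; exact absurd h (by simp)
    · by_cases hv' : (v' : ℕ) = 0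
      · rw [hiota0 v' hv'] at h'; exact absurd h' (by simp)
      · rw [hiota1 v hv] at h
        rw [hiota1 v' hv'] at h'
        exact G.inj v v' c h h'
  -- disj
  · intro v c h
    by_cases hv : (v : ℕ) = 0
    · rw [hiota0 v hv] at h; exact absurd h (by simp)
    · rw [hiota1 v hv] at h
      rw [hdirt1 v c hv]
      exact G.disj v c h
  -- ord
  · intro v v' c hio hd
    by_cases hv : (v : ℕ) = 0
    · rw [hiota0 v hv] at hio; exact absurd hio (by simp)
    · rw [hiota1 v hv] at hio
      by_cases hv' : (v' : ℕ) = 0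
      · exfalso
        rw [hdirt0 v' c hv'] at hd
        by_cases hB : π.iota ⟨0, hm0⟩ = some c
        · have := G.inj v ⟨0, hm0⟩ c hio hB
          apply hv
          rw [this]
        · rw [if_neg hB] at hd; exact hd rfl
      · rw [hdirt1 v' c hv'] at hd
        exact G.ord v v' c hio hd
  -- pen
  · intro v c hs
    by_cases hv : (v : ℕ) = 0
    · have := G.pen ⟨0, hm0⟩ c (hsupp0 v c hv hs)
      simp only [Fin.val_mk] at this
      omega
    · exact G.pen v c (hsupp1 v c hv hs)
  -- s0
  · intro v c hs hc
    by_cases hv : (v : ℕ) = 0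
    · have := G.s0 ⟨0, hm0⟩ c (hsupp0 v c hv hs) (by simpa [hv] using hc)
      rw [hv]
      exact List.mem_cons_of_mem _ (by simpa using this)
    · exact List.mem_cons_of_mem _ (G.s0 v c (hsupp1 v c hv hs) hc)
  -- sp
  · intro v c hs hc
    by_cases hv : (v : ℕ) = 0
    · have := G.sp ⟨0, hm0⟩ c (hsupp0 v c hv hs) (by simpa [hv] using hc)
      rw [hv]
      exact List.Sublist.cons _ (by simpa using this)
    · exact List.Sublist.cons _ (G.sp v c (hsupp1 v c hv hs) hc)
  -- s0'
  · intro v c hs hc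
    by_cases hv : (v : ℕ) = 0
    · omega
    · exact List.mem_cons_of_mem _ (G.s0' v c (hsupp1 v c hv hs) hc)
  -- sm
  · intro v c hs hc
    by_cases hv : (v : ℕ) = 0
    · omega
    · exact List.Sublist.cons _ (G.sm v c (hsupp1 v c hv hs) hc)
  -- cln
  · intro v hd
    obtain ⟨c, hc⟩ := hd
    by_cases hv : (v : ℕ) = 0
    · refine ⟨[], w', ?_, by simp⟩
      rw [hv, hheadltr]
      rfl
    · rw [hdirt1 v c hv] at hc
      obtain ⟨w₁, w₂, he, hn⟩ := G.cln v ⟨c, hc⟩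
      refine ⟨SIdx.neg m :: w₁, w₂, by rw [he]; rfl, ?_⟩
      intro hmem
      rcases List.mem_cons.mp hmem with hh | ht
      · have : m - ((v : ℕ) + 1) = m := by
          have := congrArg SIdx.val hh
          simpa [ltr, SIdx.val] using this
        have hvm := v.isLt
        omega
      · exact hn ht
  -- dmem
  · intro v c X h
    by_cases hv : (v : ℕ) = 0
    · rw [hdirt0 v c hv] at h
      by_cases hB : π.iota ⟨0, hm0⟩ = some c
      · rw [if_pos hB, Option.some_inj] at h
        rw [← h]
        exact List.mem_cons_self
      · rw [if_neg hB] at h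
        exact absurd h (by simp)
    · rw [hdirt1 v c hv] at h
      exact List.mem_cons_of_mem _ (G.dmem v c X h)

end StepGoodD
section MainInduction

variable {m n : ℕ}

lemma main_induction :
    ∀ (w : List SIdx) (Ys : List (Matrix (Fin n) (Fin n) ℂ)),
    (∀ x ∈ w, x.isNeg = true ∧ 1 ≤ x.val ∧ x.val ≤ m) →
    SIP w →
    (∀ k', 3 ≤ k' → k' ≤ m - 1 →
      ¬ ([SIdx.neg k', SIdx.neg (k'-1), SIdx.neg (k'-2)].Sublist w)) →
    (∀ k', 3 ≤ k' → k' ≤ m - 1 →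
      ¬ ([SIdx.neg (k'-2), SIdx.neg (k'-1), SIdx.neg k'].Sublist w)) →
    ∃ π : Pat m n, Good m n w Ys π ∧ π.realize = prodAssign m n w Ys := by
  intro w
  induction w with
  | nil =>
    intro Ys _ _ _ _
    exact ⟨Pat.id m n, good_id m n [] Ys, by rw [Pat.realize_id]; rfl⟩
  | cons x w' ih =>
    intro Ys hw hsip hc3 hi3
    have hw' : ∀ y ∈ w', y.isNeg = true ∧ 1 ≤ y.val ∧ y.val ≤ m :=
      fun y hy => hw y (List.mem_cons_of_mem _ hy)
    have hsip' := sip_tail hsip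
    have hc3' : ∀ k', 3 ≤ k' → k' ≤ m - 1 →
        ¬ ([SIdx.neg k', SIdx.neg (k'-1), SIdx.neg (k'-2)].Sublist w') :=
      fun k' h3 hk' hsub => hc3 k' h3 hk' (hsub.cons x)
    have hi3' : ∀ k', 3 ≤ k' → k' ≤ m - 1 →
        ¬ ([SIdx.neg (k'-2), SIdx.neg (k'-1), SIdx.neg k'].Sublist w') :=
      fun k' h3 hk' hsub => hi3 k' h3 hk' (hsub.cons x)
    cases Ys with
    | nil =>
      refine ⟨Pat.id m n, good_id m n (x :: w') [], ?_⟩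
      rw [Pat.realize_id]
      show (1 : Matrix (Fin m × Fin n) (Fin m × Fin n) ℂ) = prodAssign m n (x :: w') []
      unfold prodAssign
      rw [List.zip_nil_right]
      rfl
    | cons Y Ys' =>
      obtain ⟨π, G, hreal⟩ := ih Ys' hw' hsip' hc3' hi3'
      obtain ⟨hneg, hk1, hkm⟩ := hw x (List.mem_cons_self)
      rcases x with k | k
      · exact absurd hneg (by simp [SIdx.isNeg])
      · simp only [SIdx.val] at hk1 hkm
        have hprod : prodAssign m n (SIdx.neg k :: w') (Y :: Ys')
            = elemMat m n (SIdx.neg k) Y * prodAssign m n w' Ys' := by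
          unfold prodAssign
          rw [List.zip_cons_cons, List.map_cons, List.prod_cons]
        by_cases hkm' : k = m
        · subst hkm'
          obtain ⟨hclean, G'⟩ := good_patD (by omega) Y Ys' w' π G hsip
          refine ⟨patD (by omega) Y π, G', ?_⟩
          rw [realize_patD (by omega) Y π hclean, hreal, hprod]
        · have hkm2 : k < m := by omega
          obtain ⟨hclean, hO2a, hO2b, G'⟩ :=
            good_patS k hk1 hkm2 Y Ys' w' π G hsip hc3 hi3
          refine ⟨patS k hk1 hkm2 Y π, G', ?_⟩
          rw [realize_patS k hk1 hkm2 Y π hclean hO2a hO2b, hreal, hprod]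

end MainInduction
/-- Let `α` be an index tuple with indices from `{−m,…,−1}` satisfying
the SIP, with `c_{−k}(α) ≤ 1` and `i_{−k}(α) ≤ 1` for every `1 ≤ k ≤ m−1`, and let `Xs`
be a matrix assignment for `α`.  Then `M_α(Xs)` is block penta-diagonal, and every block
of `M_α(Xs)` is `0`, `I_n`, or one of the matrices occurring in `Xs`. -/
theorem prodAssign_blockPenta_of_neg {m n : ℕ} (hm : 2 ≤ m)
    (α : List SIdx) (Xs : List (Matrix (Fin n) (Fin n) ℂ))
    (hα : ∀ k ∈ α, k.isNeg = true ∧ 1 ≤ k.val ∧ k.val ≤ m)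
    (hsip : SIP α)
    (hci : ∀ k : ℕ, 1 ≤ k → k ≤ m - 1 → consAt α (.neg k) ≤ 1 ∧ invsAt α (.neg k) ≤ 1)
    (hlen : α.length = Xs.length) :
    BlockPenta (prodAssign m n α Xs) ∧
    ∀ i j : Fin m,
      blockOf (prodAssign m n α Xs) i j = 0 ∨
      blockOf (prodAssign m n α Xs) i j = 1 ∨
      blockOf (prodAssign m n α Xs) i j ∈ Xs := by
  have hc3 : ∀ k', 3 ≤ k' → k' ≤ m - 1 →
      ¬ ([SIdx.neg k', SIdx.neg (k'-1), SIdx.neg (k'-2)].Sublist α) := by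
    intro k' h3 hk' hsub
    refine consAt_no_chain (hci k' (by omega) hk').1 ?_
    have hch : chainUp (SIdx.neg k') 2
        = [SIdx.neg k', SIdx.neg (k'-1), SIdx.neg (k'-2)] := by
      rw [chainUp_two, SIdx_succ_neg (by omega), SIdx_succ_neg (by omega)]
      have : k' - 1 - 1 = k' - 2 := by omega
      rw [this]
    rw [hch]
    exact hsub
  have hi3 : ∀ k', 3 ≤ k' → k' ≤ m - 1 →
      ¬ ([SIdx.neg (k'-2), SIdx.neg (k'-1), SIdx.neg k'].Sublist α) := by
    intro k' h3 hk' hsub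
    refine invsAt_no_chain (hci k' (by omega) hk').2 ?_
    have hch : (chainUp (SIdx.neg k') 2).reverse
        = [SIdx.neg (k'-2), SIdx.neg (k'-1), SIdx.neg k'] := by
      rw [chainUp_two, SIdx_succ_neg (by omega), SIdx_succ_neg (by omega)]
      have : k' - 1 - 1 = k' - 2 := by omega
      rw [this]
      rfl
    rw [hch]
    exact hsub
  obtain ⟨π, G, hreal⟩ := main_induction α Xs hα hsip hc3 hi3
  constructor
  · intro i j hij
    funext p q
    show prodAssign m n α Xs (i, p) (j, q) = 0
    rw [← hreal]
    simp only [Pat.realize]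
    have h1 : ¬ π.iota i = some j := by
      intro h
      have := G.pen i j (Or.inl h)
      omega
    rw [if_neg h1]
    cases hd : π.dirt i j with
    | some X =>
      exfalso
      have := G.pen i j (Or.inr (by rw [hd]; simp))
      omega
    | none => rfl
  · intro i j
    by_cases hio : π.iota i = some j
    · right; left
      funext p q
      show prodAssign m n α Xs (i, p) (j, q) = (1 : Matrix (Fin n) (Fin n) ℂ) p q
      rw [← hreal]
      simp only [Pat.realize]
      rw [if_pos hio, Matrix.one_apply]
    · cases hd : π.dirt i j with
      | some X =>
        right; right
        have hX : blockOf (prodAssign m n α Xs) i j = X := by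
          funext p q
          show prodAssign m n α Xs (i, p) (j, q) = X p q
          rw [← hreal]
          simp only [Pat.realize]
          rw [if_neg hio, hd]
        rw [hX]
        exact G.dmem i j X hd
      | none =>
        left
        funext p q
        show prodAssign m n α Xs (i, p) (j, q) = 0
        rw [← hreal]
        simp only [Pat.realize]
        rw [if_neg hio, hd]
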